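/- arXiv:2208.13852 — 2 statements merged into one kernel-verified Lean document; each statement's English description precedes it below -/
import Mathlib

section
/- If f : H → G is an embedding of undirected graphs (an étale map injective on vertices) with H connected, then the composite ∂(H) ↪ A_H → A_G is injective. -/
namespace GraphPaper

/-- An undirected graph with loose ends (Joyal–Kock style): finite sets of arcs `A`,
darts `D`, vertices `V`, a fixpoint-free involution on arcs, an injection `D → A`,
and a function `t : D → V`. -/
structure UGraph where
  A : Type
  D : Type
  V : Type
  finA : Finite A
  finD : Finite D
  finV : Finite V
  dag : A → A
  dag_invol : Function.Involutive dag
  dag_nofix : ∀ a, dag a ≠ a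
  emb : D → A
  emb_inj : Function.Injective emb
  t : D → V

namespace UGraph

/-- The arc `a` ends at the vertex `v` (i.e. `a` comes from a dart over `v`). -/
def endAt (G : UGraph) (a : G.A) (v : G.V) : Prop := ∃ d, G.emb d = a ∧ G.t d = v

/-- One-step adjacency on the disjoint union of arcs and vertices. -/
def touches (G : UGraph) : G.A ⊕ G.V → G.A ⊕ G.V → Prop
  | .inl a, .inl b => b = G.dag a
  | .inl a, .inr v => G.endAt a v
  | .inr v, .inl a => G.endAt a v
  | .inr _, .inr _ => False

/-- Connectedness: any two elements of `A ⊕ V` are joined by a chain of adjacencies. -/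
def Connected (G : UGraph) : Prop :=
  ∀ x y : G.A ⊕ G.V, Relation.ReflTransGen G.touches x y

end UGraph

/-- An element of an alternating path: an arc or a vertex. -/
inductive Elt (G : UGraph) where
  | arc : G.A → Elt G
  | vtx : G.V → Elt G

namespace UGraph

/-- Consecutive incidence condition in a path: if `a v` appears then `t(a) = v`;
if `v a` appears then `t(a†) = v`. -/
def step (G : UGraph) : Elt G → Elt G → Prop
  | .arc a, .vtx v => G.endAt a v
  | .vtx v, .arc a => G.endAt (G.dag a) v
  | _, _ => False

/-- A path is a finite alternating sequence of arcs and vertices with the incidences. -/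
def IsPath (G : UGraph) (l : List (Elt G)) : Prop := l.Chain' G.step

/-- A cycle is a path of length strictly greater than one beginning and ending at the
same arc or vertex. -/
def IsCycle (G : UGraph) (l : List (Elt G)) : Prop :=
  G.IsPath l ∧ 1 < l.length ∧ l.head? = l.getLast?

/-- A tree is a connected graph with no cycles. -/
def IsTree (G : UGraph) : Prop := G.Connected ∧ ∀ l, ¬ G.IsCycle l

end UGraph

/-- An étale map of undirected graphs: functions on arcs, darts, vertices commuting with
the involutions and the structure maps, such that the dart–vertex square is a pullback. -/
def IsEtaleMap (G H : UGraph) (fA : G.A → H.A) (fD : G.D → H.D) (fV : G.V → H.V) : Prop :=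
  (∀ a, fA (G.dag a) = H.dag (fA a)) ∧
  (∀ d, fA (G.emb d) = H.emb (fD d)) ∧
  (∀ d, fV (G.t d) = H.t (fD d)) ∧
  (∀ (d' : H.D) (v : G.V), H.t d' = fV v → ∃! d : G.D, fD d = d' ∧ G.t d = v)

/-- A subgraph of `G`, determined by a set of edges (encoded as an involution-closed set
of arcs) and a set of vertices, closed in the sense that all darts over a chosen vertex
have their arcs present. -/
structure Subgraph (G : UGraph) where
  arcs : Set G.A
  verts : Set G.V
  arcs_inv : ∀ a ∈ arcs, G.dag a ∈ arcs
  closed : ∀ d : G.D, G.t d ∈ verts → G.emb d ∈ arcs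

namespace Subgraph

variable {G : UGraph}

/-- Membership of an arc-or-vertex in the subgraph. -/
def mem (H : Subgraph G) : G.A ⊕ G.V → Prop
  | .inl a => a ∈ H.arcs
  | .inr v => v ∈ H.verts

/-- Adjacency within the subgraph. -/
def touchesIn (H : Subgraph G) (x y : G.A ⊕ G.V) : Prop :=
  H.mem x ∧ H.mem y ∧ G.touches x y

/-- The subgraph is connected. -/
def Conn (H : Subgraph G) : Prop :=
  ∀ x y, H.mem x → H.mem y → Relation.ReflTransGen H.touchesIn x y

/-- The subgraph is nonempty (has an arc or a vertex). -/
def NonemptySub (H : Subgraph G) : Prop := (∃ a, a ∈ H.arcs) ∨ (∃ v, v ∈ H.verts)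

/-- Two subgraphs overlap if they share an edge or a vertex. -/
def Overlap (S T : Subgraph G) : Prop :=
  (∃ a, a ∈ S.arcs ∧ a ∈ T.arcs) ∨ (∃ v, v ∈ S.verts ∧ v ∈ T.verts)

/-- Union of subgraphs. -/
def union (S T : Subgraph G) : Subgraph G where
  arcs := S.arcs ∪ T.arcs
  verts := S.verts ∪ T.verts
  arcs_inv := fun a ha =>
    ha.elim (fun h => Or.inl (S.arcs_inv a h)) (fun h => Or.inr (T.arcs_inv a h))
  closed := fun d hd =>
    hd.elim (fun h => Or.inl (S.closed d h)) (fun h => Or.inr (T.closed d h))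

/-- Intersection of subgraphs. -/
def inter (S T : Subgraph G) : Subgraph G where
  arcs := S.arcs ∩ T.arcs
  verts := S.verts ∩ T.verts
  arcs_inv := fun a ha => ⟨S.arcs_inv a ha.1, T.arcs_inv a ha.2⟩
  closed := fun d hd => ⟨S.closed d hd.1, T.closed d hd.2⟩

/-- The boundary of a subgraph: arcs of the subgraph not supported by a dart of the
subgraph. -/
def bdry (H : Subgraph G) : Set G.A :=
  {a | a ∈ H.arcs ∧ ¬ ∃ d, G.emb d = a ∧ G.t d ∈ H.verts}

/-- A subtree: a nonempty connected subgraph (of a tree). -/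
def IsSubtree (H : Subgraph G) : Prop := H.Conn ∧ H.NonemptySub

end Subgraph

/-- The star subgraph at a vertex `v`: the vertex together with all edges incident to it. -/
def UGraph.starAt (G : UGraph) (v : G.V) : Subgraph G where
  arcs := {a | G.endAt a v ∨ G.endAt (G.dag a) v}
  verts := {v}
  arcs_inv := fun a ha =>
    ha.elim (fun h => Or.inr (show G.endAt (G.dag (G.dag a)) v by rwa [G.dag_invol a]))
      (fun h => Or.inl h)
  closed := fun d hd => Or.inl ⟨d, rfl, hd⟩

/-- `∂(★_v) = nbhd(v)†`: the boundary arcs of the star at `v`. -/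
def UGraph.starBdry (G : UGraph) (v : G.V) : Set G.A :=
  {a | ∃ d, G.t d = v ∧ a = G.dag (G.emb d)}

end GraphPaper

/-!
Let `a ≠ b` be loose arcs of `H` with the same image. If `a†` and `b†` both come from darts,
those darts have the same image, and an étale map that is injective on vertices is injective
on darts, so `a† = b†` and hence `a = b`. Otherwise, say `a†` is loose too: then `{a, a†}` is
a whole component of `H`, so connectedness forces `b = a†`, and `f a = f a† = (f a)†`
contradicts that `†` has no fixed points.
-/

namespace GraphPaper

namespace UGraph

variable {H : UGraph}

lemma eq_or_eq_dag_of_reflTransGen_touches {a : H.A}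
    (ha : a ∉ Set.range H.emb) (hda : H.dag a ∉ Set.range H.emb)
    {x : H.A ⊕ H.V} (hx : Relation.ReflTransGen H.touches (.inl a) x) :
    x = .inl a ∨ x = .inl (H.dag a) := by
  induction hx with
  | refl => exact Or.inl rfl
  | @tail y z _ hyz ih =>
    rcases ih with rfl | rfl <;> rcases z with b | v
    · exact Or.inr (congrArg Sum.inl hyz)
    · exact absurd (hyz.imp fun _ hd => hd.1) ha
    · exact Or.inl (congrArg Sum.inl (hyz.trans (H.dag_invol a)))
    · exact absurd (hyz.imp fun _ hd => hd.1) hda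

lemma Connected.eq_or_eq_dag_of_loose (hconn : H.Connected) {a : H.A}
    (ha : a ∉ Set.range H.emb) (hda : H.dag a ∉ Set.range H.emb) (b : H.A) :
    b = a ∨ b = H.dag a := by
  simpa using eq_or_eq_dag_of_reflTransGen_touches ha hda (hconn (.inl a) (.inl b))

end UGraph

namespace IsEtaleMap

variable {H G : UGraph} {fA : H.A → G.A} {fD : H.D → G.D} {fV : H.V → G.V}

lemma injective_darts (h : IsEtaleMap H G fA fD fV) (hV : Function.Injective fV) :
    Function.Injective fD := by
  obtain ⟨-, -, ht, hpb⟩ := h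
  intro d₁ d₂ hd
  have hv : H.t d₂ = H.t d₁ := hV (by rw [ht, ht, hd])
  obtain ⟨d, -, huniq⟩ := hpb (fD d₁) (H.t d₁) (ht d₁).symm
  exact (huniq d₁ ⟨rfl, rfl⟩).trans (huniq d₂ ⟨hd.symm, hv⟩).symm

lemma injOn_dag_preimage_range (h : IsEtaleMap H G fA fD fV) (hD : Function.Injective fD) :
    Set.InjOn fA (H.dag ⁻¹' Set.range H.emb) := by
  obtain ⟨hdag, hemb, -, -⟩ := h
  rintro a ⟨d₁, hd₁⟩ b ⟨d₂, hd₂⟩ hab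
  have hfd : fD d₁ = fD d₂ := G.emb_inj (by rw [← hemb, ← hemb, hd₁, hd₂, hdag, hdag, hab])
  exact H.dag_invol.injective (by rw [← hd₁, ← hd₂, hD hfd])

end IsEtaleMap

lemma eq_of_map_eq_of_loose {H G : UGraph} {fA : H.A → G.A}
    (hdag : ∀ a, fA (H.dag a) = G.dag (fA a)) (hconn : H.Connected) {a b : H.A}
    (ha : a ∉ Set.range H.emb) (hda : H.dag a ∉ Set.range H.emb) (hab : fA a = fA b) :
    a = b := by
  rcases hconn.eq_or_eq_dag_of_loose ha hda b with rfl | rfl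
  · rfl
  · exact absurd (hab.trans (hdag a)).symm (G.dag_nofix _)

/-- If `f : H → G` is an embedding of undirected graphs (an étale map injective on
vertices) with `H` connected, then the composite `∂(H) ↪ A_H → A_G` is injective,
i.e. `fA` is injective on the boundary of `H`. -/
theorem embedding_injective_on_boundary (H G : UGraph)
    (fA : H.A → G.A) (fD : H.D → G.D) (fV : H.V → G.V)
    (h : IsEtaleMap H G fA fD fV) (hV : Function.Injective fV)
    (hconn : H.Connected) :
    Set.InjOn fA ((Set.range H.emb)ᶜ) := by
  intro a ha b hb hab
  by_cases hda : H.dag a ∈ Set.range H.emb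
  · by_cases hdb : H.dag b ∈ Set.range H.emb
    · exact h.injOn_dag_preimage_range (h.injective_darts hV) hda hdb hab
    · exact (eq_of_map_eq_of_loose h.1 hconn hb hdb hab.symm).symm
  · exact eq_of_map_eq_of_loose h.1 hconn ha hda hab

end GraphPaper
end

section
/- Let S and T be subtrees of an undirected tree G intersecting exactly in a single edge e = [a, a†] with a ∈ ∂(S) and a† ∈ ∂(T), and suppose neither S nor T is an edge. Then the boundary of the union satisfies ∂(S ∪ T) = (∂(S) \ {a}) ⊔ (∂(T) \ {a†}), and this union is disjoint. If S is an edge then ∂(S ∪ T) = ∂(T), and if T is an edge then ∂(S ∪ T) = ∂(S). -/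
/-!
Inside a subgraph `H`, an edge `{b, b†}` neither of whose arcs is supported by a dart over a
vertex of `H` is closed under adjacency in `H`. Hence a connected subgraph with a vertex
supports each of its edges from at least one side, and a connected subgraph without vertices
consists of a single edge. In the main case this makes `a` supported in `T` and `a†` in `S`,
so exactly these two arcs of `∂S ∪ ∂T` become interior in `S ∪ T`; in the degenerate case `S`
is the edge `e ⊆ T`, and adding it changes nothing.
-/

namespace GraphPaper

namespace Subgraph

variable {G : UGraph}

theorem touchesIn_edge_closed (H : Subgraph G) {b : G.A}
    (hb : ∀ d, G.t d ∈ H.verts → G.emb d ≠ b ∧ G.emb d ≠ G.dag b)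
    {x y : G.A ⊕ G.V} (hx : x = .inl b ∨ x = .inl (G.dag b)) (hxy : H.touchesIn x y) :
    y = .inl b ∨ y = .inl (G.dag b) := by
  obtain ⟨-, hy, hxy⟩ := hxy
  rcases hx with rfl | rfl <;> rcases y with e | v
  · exact Or.inr (congrArg Sum.inl hxy)
  · obtain ⟨d, hdb, rfl⟩ := hxy
    exact absurd hdb (hb d hy).1
  · exact Or.inl (congrArg Sum.inl (hxy.trans (G.dag_invol b)))
  · obtain ⟨d, hdb, rfl⟩ := hxy
    exact absurd hdb (hb d hy).2

theorem reflTransGen_edge_closed (H : Subgraph G) {b : G.A}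
    (hb : ∀ d, G.t d ∈ H.verts → G.emb d ≠ b ∧ G.emb d ≠ G.dag b)
    {x y : G.A ⊕ G.V} (hx : x = .inl b ∨ x = .inl (G.dag b))
    (hxy : Relation.ReflTransGen H.touchesIn x y) :
    y = .inl b ∨ y = .inl (G.dag b) := by
  induction hxy with
  | refl => exact hx
  | tail _ hstep ih => exact H.touchesIn_edge_closed hb ih hstep

theorem exists_dart_of_mem_arcs {H : Subgraph G} (hH : H.Conn) (hv : H.verts.Nonempty)
    {b : G.A} (hb : b ∈ H.arcs) :
    ∃ d, G.t d ∈ H.verts ∧ (G.emb d = b ∨ G.emb d = G.dag b) := by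
  by_contra! hno
  obtain ⟨w, hw⟩ := hv
  rcases H.reflTransGen_edge_closed hno (Or.inl rfl) (hH _ (.inr w) hb hw) with h | h <;>
    cases h

theorem exists_dart_dag_of_mem_bdry {H : Subgraph G} (hH : H.Conn) (hv : H.verts.Nonempty)
    {a : G.A} (ha : a ∈ H.bdry) :
    ∃ d, G.emb d = G.dag a ∧ G.t d ∈ H.verts := by
  obtain ⟨d, hd, hda | hda⟩ := exists_dart_of_mem_arcs hH hv ha.1
  · exact absurd ⟨d, hda, hd⟩ ha.2
  · exact ⟨d, hda, hd⟩

theorem arcs_subset_edge_of_verts_eq_empty {H : Subgraph G} (hH : H.Conn) (hv : H.verts = ∅)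
    {a : G.A} (ha : a ∈ H.arcs) :
    H.arcs ⊆ {a, G.dag a} := by
  intro b hb
  have hunsupported : ∀ d, G.t d ∈ H.verts → G.emb d ≠ a ∧ G.emb d ≠ G.dag a := by
    simp [hv]
  rcases H.reflTransGen_edge_closed hunsupported (Or.inl rfl) (hH (.inl a) (.inl b) ha hb)
    with h | h
  exacts [Or.inl (Sum.inl_injective h), Or.inr (Sum.inl_injective h)]

theorem mem_bdry_union_iff {S T : Subgraph G} {b : G.A} :
    b ∈ (S.union T).bdry ↔ b ∈ S.arcs ∪ T.arcs ∧
      (¬∃ d, G.emb d = b ∧ G.t d ∈ S.verts) ∧ ¬∃ d, G.emb d = b ∧ G.t d ∈ T.verts := by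
  simp only [bdry, union, Set.mem_ofPred_eq, Set.mem_union, and_or_left, exists_or, not_or]

theorem bdry_union_comm (S T : Subgraph G) : (S.union T).bdry = (T.union S).bdry := by
  ext b
  simp only [mem_bdry_union_iff, Set.union_comm S.arcs]
  tauto

theorem bdry_union_of_verts_eq_empty {S T : Subgraph G} (hv : S.verts = ∅)
    (harcs : S.arcs ⊆ T.arcs) : (S.union T).bdry = T.bdry := by
  simp only [bdry, union, hv, Set.empty_union, Set.union_eq_self_of_subset_left harcs]

theorem bdry_union_of_inter_subset_edge {S T : Subgraph G} {a : G.A}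
    (harcs : S.arcs ∩ T.arcs ⊆ {a, G.dag a})
    (haT : ∃ d, G.emb d = a ∧ G.t d ∈ T.verts)
    (haS : ∃ d, G.emb d = G.dag a ∧ G.t d ∈ S.verts) :
    (S.union T).bdry = (S.bdry \ {a}) ∪ (T.bdry \ {G.dag a}) := by
  ext b
  simp only [mem_bdry_union_iff, Set.mem_union, Set.mem_sdiff, Set.mem_singleton_iff]
  constructor
  · rintro ⟨hb | hb, hnS, hnT⟩
    · exact Or.inl ⟨⟨hb, hnS⟩, by rintro rfl; exact hnT haT⟩
    · exact Or.inr ⟨⟨hb, hnT⟩, by rintro rfl; exact hnS haS⟩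
  · rintro (⟨⟨hbS, hnS⟩, hba⟩ | ⟨⟨hbT, hnT⟩, hba⟩)
    · refine ⟨Or.inl hbS, hnS, ?_⟩
      rintro ⟨d, rfl, hd⟩
      rcases harcs ⟨hbS, T.closed d hd⟩ with h | h
      · exact hba h
      · exact hnS (h ▸ haS)
    · refine ⟨Or.inr hbT, ?_, hnT⟩
      rintro ⟨d, rfl, hd⟩
      rcases harcs ⟨S.closed d hd, hbT⟩ with h | h
      · exact hnT (h ▸ haT)
      · exact hba h

theorem bdry_diff_inter_bdry_diff_eq_empty {S T : Subgraph G} {a : G.A}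
    (harcs : S.arcs ∩ T.arcs ⊆ {a, G.dag a}) :
    (S.bdry \ {a}) ∩ (T.bdry \ {G.dag a}) = ∅ := by
  refine Set.eq_empty_of_forall_notMem ?_
  rintro b ⟨⟨hbS, hba⟩, hbT, hbda⟩
  rcases harcs ⟨hbS.1, hbT.1⟩ with rfl | rfl
  exacts [hba rfl, hbda rfl]

end Subgraph

theorem boundary_of_union_general (G : UGraph)
    (S T : Subgraph G) (hS : S.IsSubtree) (hT : T.IsSubtree) (a : G.A)
    (harcs : S.arcs ∩ T.arcs = {a, G.dag a})
    (haS : a ∈ S.bdry) (haT : G.dag a ∈ T.bdry) :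
    (S.verts.Nonempty → T.verts.Nonempty →
      (S.union T).bdry = (S.bdry \ {a}) ∪ (T.bdry \ {G.dag a}) ∧
      (S.bdry \ {a}) ∩ (T.bdry \ {G.dag a}) = ∅) ∧
    (S.verts = ∅ → (S.union T).bdry = T.bdry) ∧
    (T.verts = ∅ → (S.union T).bdry = S.bdry) := by
  have hedgeT : {a, G.dag a} ⊆ T.arcs := harcs ▸ Set.inter_subset_right
  have hedgeS : {a, G.dag a} ⊆ S.arcs := harcs ▸ Set.inter_subset_left
  refine ⟨fun hSv hTv => ?_, fun hSv => ?_, fun hTv => ?_⟩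
  · have hsupT := Subgraph.exists_dart_dag_of_mem_bdry hT.1 hTv haT
    rw [G.dag_invol] at hsupT
    exact ⟨Subgraph.bdry_union_of_inter_subset_edge harcs.le hsupT
        (Subgraph.exists_dart_dag_of_mem_bdry hS.1 hSv haS),
      Subgraph.bdry_diff_inter_bdry_diff_eq_empty harcs.le⟩
  · exact Subgraph.bdry_union_of_verts_eq_empty hSv
      ((Subgraph.arcs_subset_edge_of_verts_eq_empty hS.1 hSv haS.1).trans hedgeT)
  · rw [Subgraph.bdry_union_comm]
    exact Subgraph.bdry_union_of_verts_eq_empty hTv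
      ((Subgraph.arcs_subset_edge_of_verts_eq_empty hT.1 hTv (hedgeT (.inl rfl))).trans hedgeS)

/-- Let `S`, `T` be subtrees of an undirected tree `G` intersecting exactly in the
single edge `e = [a, a†]`, with `a ∈ ∂(S)` and `a† ∈ ∂(T)`. If neither `S` nor `T` is
an edge (i.e. both have a vertex), then `∂(S ∪ T) = (∂S \ {a}) ⊔ (∂T \ {a†})` and the
union is disjoint. If `S` is an edge (has no vertices) then `∂(S ∪ T) = ∂(T)`, and if
`T` is an edge then `∂(S ∪ T) = ∂(S)`. -/
theorem boundary_of_union (G : UGraph) (hG : G.IsTree)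
    (S T : Subgraph G) (hS : S.IsSubtree) (hT : T.IsSubtree) (a : G.A)
    (harcs : S.arcs ∩ T.arcs = {a, G.dag a})
    (hverts : S.verts ∩ T.verts = ∅)
    (haS : a ∈ S.bdry) (haT : G.dag a ∈ T.bdry) :
    (S.verts.Nonempty → T.verts.Nonempty →
      (S.union T).bdry = (S.bdry \ {a}) ∪ (T.bdry \ {G.dag a}) ∧
      (S.bdry \ {a}) ∩ (T.bdry \ {G.dag a}) = ∅) ∧
    (S.verts = ∅ → (S.union T).bdry = T.bdry) ∧
    (T.verts = ∅ → (S.union T).bdry = S.bdry) :=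
  boundary_of_union_general G S T hS hT a harcs haS haT

end GraphPaper
end
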